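/- If a nontrivial 1-generated F-semilattice A is isomorphic to each of its nontrivial 1-generated subalgebras, then every nontrivial 1-generated algebra in the quasivariety Q(A) is isomorphic to A; in particular A is (up to isomorphism) the 1-generated free algebra of Q(A). -/

import Mathlib

inductive SLTerm (F : Type) : Type where
  | var : SLTerm F
  | meet : SLTerm F → SLTerm F → SLTerm F
  | act : F → SLTerm F → SLTerm F

/-- Evaluation of a unary term at an element of an `F`-semilattice. -/
def SLTerm.eval {F A : Type} [SemilatticeInf A] [SMul F A] : SLTerm F → A → A
  | .var, a => a
  | .meet s t, a => s.eval a ⊓ t.eval a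
  | .act g t, a => g • t.eval a

inductive SLTermN (F : Type) : Type where
  | var : ℕ → SLTermN F
  | meet : SLTermN F → SLTermN F → SLTermN F
  | act : F → SLTermN F → SLTermN F

def SLTermN.eval {F A : Type} [SemilatticeInf A] [SMul F A] : SLTermN F → (ℕ → A) → A
  | .var n, v => v n
  | .meet s t, v => s.eval v ⊓ t.eval v
  | .act g t, v => g • t.eval v

def SatQI (F : Type) (A : Type) [SemilatticeInf A] [SMul F A]
    (prem : List (SLTermN F × SLTermN F)) (c : SLTermN F × SLTermN F) : Prop :=
  ∀ v : ℕ → A, (∀ p ∈ prem, p.1.eval v = p.2.eval v) → c.1.eval v = c.2.eval v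

/-- `B` belongs to the quasivariety generated by `A`. -/
def InQ (F : Type) (A B : Type) [SemilatticeInf A] [SMul F A]
    [SemilatticeInf B] [SMul F B] : Prop :=
  ∀ prem c, SatQI F A prem c → SatQI F B prem c

/-- `B` belongs to the variety generated by `A`. -/
def InV (F : Type) (A B : Type) [SemilatticeInf A] [SMul F A]
    [SemilatticeInf B] [SMul F B] : Prop :=
  ∀ s t : SLTermN F, (∀ v : ℕ → A, s.eval v = t.eval v) → ∀ v : ℕ → B, s.eval v = t.eval v

def IsHom (F : Type) {A B : Type} [SemilatticeInf A] [SMul F A] [SemilatticeInf B] [SMul F B]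
    (φ : A → B) : Prop :=
  (∀ x y : A, φ (x ⊓ y) = φ x ⊓ φ y) ∧ ∀ (g : F) (x : A), φ (g • x) = g • φ x

/-- The subuniverse of `A` generated by `a`. -/
def genSet (F : Type) {A : Type} [SemilatticeInf A] [SMul F A] (a : A) : Set A :=
  Set.range fun t : SLTerm F => t.eval a

/-- The quasivariety generated by `A` is a minimal quasivariety of `F`-semilattices. -/
def MinGen (F : Type) [CommGroup F] (A : Type) [SemilatticeInf A] [MulAction F A] : Prop :=
  Nontrivial A ∧
    ∀ (B : Type) [SemilatticeInf B] [MulAction F B],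
      (∀ (g : F) (x y : B), g • (x ⊓ y) = g • x ⊓ g • y) →
      InQ F A B → Nontrivial B → InQ F B A

/-
Since `F` is abelian, unary term operations commute with each other, so an equation
`s a = t a` at the generator `a` of `A` spreads to all of `A`; it is then an identity of `A`,
hence of `B ∈ Q(A)`. Conversely, if `s b = t b` while `P b ≠ Q b` in `B`, the quasi-identity
`s = t → P = Q` fails in `B`, hence in `A` at some `x`. The subalgebra generated by `x` is then
nontrivial, so some embedding `φ : A → A` has image `genSet F x`; as `s` and `t` agree on that
image, `φ (s a) = φ (t a)`, and `s a = t a`. Thus `a` and `b` satisfy the same equations between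
unary terms, which makes `t a ↦ t b` a well-defined isomorphism.
-/

namespace SLTerm

variable {F C : Type} [SemilatticeInf C]

lemma eval_inf [SMul F C] (hd : ∀ (g : F) (x y : C), g • (x ⊓ y) = g • x ⊓ g • y)
    (t : SLTerm F) (x y : C) : t.eval (x ⊓ y) = t.eval x ⊓ t.eval y := by
  induction t with
  | var => rfl
  | meet s t hs ht =>
      simp only [eval, hs, ht]
      exact inf_inf_inf_comm _ _ _ _
  | act g t ht => simp only [eval, ht, hd]

lemma eval_smul [CommMonoid F] [MulAction F C]
    (hd : ∀ (g : F) (x y : C), g • (x ⊓ y) = g • x ⊓ g • y)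
    (t : SLTerm F) (g : F) (x : C) : t.eval (g • x) = g • t.eval x := by
  induction t with
  | var => rfl
  | meet s t hs ht => simp only [eval, hs, ht, hd]
  | act h t ht => simp only [eval, ht, smul_smul, mul_comm]

lemma eval_comm [CommMonoid F] [MulAction F C]
    (hd : ∀ (g : F) (x y : C), g • (x ⊓ y) = g • x ⊓ g • y)
    (s t : SLTerm F) (x : C) : s.eval (t.eval x) = t.eval (s.eval x) := by
  induction t with
  | var => rfl
  | meet t₁ t₂ h₁ h₂ => simp only [eval, eval_inf hd, h₁, h₂]
  | act g t ht => simp only [eval, eval_smul hd, ht]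

lemma eval_eq_of_mem_genSet [CommMonoid F] [MulAction F C]
    (hd : ∀ (g : F) (x y : C), g • (x ⊓ y) = g • x ⊓ g • y)
    {s t : SLTerm F} {x y : C} (h : s.eval x = t.eval x) (hy : y ∈ genSet F x) :
    s.eval y = t.eval y := by
  obtain ⟨u, rfl⟩ := hy
  rw [eval_comm hd s u, h, eval_comm hd u t]

lemma eval_eq_of_eval_eq_generator [CommMonoid F] [MulAction F C]
    (hd : ∀ (g : F) (x y : C), g • (x ⊓ y) = g • x ⊓ g • y)
    {a : C} (hgen : ∀ x : C, ∃ t : SLTerm F, t.eval a = x)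
    {s t : SLTerm F} (h : s.eval a = t.eval a) (x : C) : s.eval x = t.eval x :=
  eval_eq_of_mem_genSet hd h (hgen x)

def toN : SLTerm F → SLTermN F
  | .var => .var 0
  | .meet s t => .meet s.toN t.toN
  | .act g t => .act g t.toN

lemma toN_eval [SMul F C] (t : SLTerm F) (v : ℕ → C) : t.toN.eval v = t.eval (v 0) := by
  induction t with
  | var => rfl
  | meet s t hs ht => simp only [toN, eval, SLTermN.eval, hs, ht]
  | act g t ht => simp only [toN, eval, SLTermN.eval, ht]

end SLTerm

section Transfer

variable {F A B : Type} [SemilatticeInf A] [SMul F A] [SemilatticeInf B] [SMul F B]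

lemma IsHom.eval {φ : A → B} (hφ : IsHom F φ) (t : SLTerm F) (x : A) :
    φ (t.eval x) = t.eval (φ x) := by
  induction t with
  | var => rfl
  | meet s t hs ht => simp only [SLTerm.eval, hφ.1, hs, ht]
  | act g t ht => simp only [SLTerm.eval, hφ.2, ht]

lemma InQ.eval_eq (hQ : InQ F A B) {s t : SLTerm F} (h : ∀ x : A, s.eval x = t.eval x)
    (y : B) : s.eval y = t.eval y := by
  have hsat : SatQI F A [] (s.toN, t.toN) := fun v _ => by
    simpa only [SLTerm.toN_eval] using h (v 0)
  simpa only [SLTerm.toN_eval] using hQ [] _ hsat (fun _ => y) (by simp)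

lemma InQ.exists_eval_eq_eval_ne (hQ : InQ F A B) {s t P Q : SLTerm F} {y : B}
    (hst : s.eval y = t.eval y) (hPQ : P.eval y ≠ Q.eval y) :
    ∃ x : A, s.eval x = t.eval x ∧ P.eval x ≠ Q.eval x := by
  by_contra! hA
  have hsat : SatQI F A [(s.toN, t.toN)] (P.toN, Q.toN) := fun v hv => by
    simp only [List.mem_singleton, forall_eq, SLTerm.toN_eval] at hv ⊢
    exact hA _ hv
  refine hPQ ?_
  simpa only [SLTerm.toN_eval] using
    hQ _ _ hsat (fun _ => y) (by simpa only [List.mem_singleton, forall_eq, SLTerm.toN_eval])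

lemma exists_eval_eq_of_eval_eq_imp {a : A} {b : B}
    (hgen : ∀ x : A, ∃ t : SLTerm F, t.eval a = x)
    (h : ∀ s t : SLTerm F, s.eval a = t.eval a → s.eval b = t.eval b) :
    ∃ φ : A → B, ∀ t : SLTerm F, φ (t.eval a) = t.eval b := by
  choose T hT using hgen
  exact ⟨fun x => (T x).eval b, fun t => h _ _ (hT _)⟩

lemma exists_bijective_isHom_of_eval_eq_iff {a : A} {b : B}
    (hgenA : ∀ x : A, ∃ t : SLTerm F, t.eval a = x)
    (hgenB : ∀ y : B, ∃ t : SLTerm F, t.eval b = y)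
    (h : ∀ s t : SLTerm F, s.eval a = t.eval a ↔ s.eval b = t.eval b) :
    ∃ φ : A → B, Function.Bijective φ ∧ IsHom F φ ∧ φ a = b := by
  obtain ⟨φ, hφ⟩ := exists_eval_eq_of_eval_eq_imp hgenA fun s t => (h s t).1
  refine ⟨φ, ⟨?_, ?_⟩, ⟨?_, ?_⟩, hφ .var⟩
  · intro x y
    obtain ⟨s, rfl⟩ := hgenA x
    obtain ⟨t, rfl⟩ := hgenA y
    rw [hφ, hφ]
    exact (h s t).2
  · intro y
    obtain ⟨t, rfl⟩ := hgenB y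
    exact ⟨t.eval a, hφ t⟩
  · intro x y
    obtain ⟨s, rfl⟩ := hgenA x
    obtain ⟨t, rfl⟩ := hgenA y
    rw [hφ, hφ]
    exact hφ (.meet s t)
  · intro g x
    obtain ⟨t, rfl⟩ := hgenA x
    rw [hφ]
    exact hφ (.act g t)

end Transfer

lemma eval_eq_of_injective_isHom {F A C : Type} [CommMonoid F] [SemilatticeInf A] [SMul F A]
    [SemilatticeInf C] [MulAction F C] (hd : ∀ (g : F) (x y : C), g • (x ⊓ y) = g • x ⊓ g • y)
    {φ : A → C} (hφ : IsHom F φ) (hinj : Function.Injective φ) {a : A} {x : C}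
    (ha : φ a ∈ genSet F x) {s t : SLTerm F} (h : s.eval x = t.eval x) :
    s.eval a = t.eval a :=
  hinj <| by rw [hφ.eval, hφ.eval]; exact SLTerm.eval_eq_of_mem_genSet hd h ha

theorem stmt_11_general (F : Type) [CommGroup F] (A : Type) [SemilatticeInf A] [MulAction F A]
    (hA : ∀ (g : F) (x y : A), g • (x ⊓ y) = g • x ⊓ g • y)
    (a : A) (hgen : ∀ x : A, ∃ t : SLTerm F, t.eval a = x)
    (hiso : ∀ b : A, (∃ x y : A, x ∈ genSet F b ∧ y ∈ genSet F b ∧ x ≠ y) →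
      ∃ φ : A → A, Function.Injective φ ∧ Set.range φ = genSet F b ∧ IsHom F φ) :
    ∀ (B : Type) [SemilatticeInf B] [MulAction F B],
      (∀ (g : F) (x y : B), g • (x ⊓ y) = g • x ⊓ g • y) →
      InQ F A B → Nontrivial B →
      ∀ b : B, (∀ y : B, ∃ t : SLTerm F, t.eval b = y) →
        ∃ φ : A → B, Function.Bijective φ ∧ IsHom F φ ∧ φ a = b := by
  intro B _ _ _ hQ _ b hgenB
  refine exists_bijective_isHom_of_eval_eq_iff hgen hgenB fun s t =>
    ⟨fun h => hQ.eval_eq (SLTerm.eval_eq_of_eval_eq_generator hA hgen h) b, fun h => ?_⟩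
  obtain ⟨y, z, hyz⟩ := exists_pair_ne B
  obtain ⟨P, rfl⟩ := hgenB y
  obtain ⟨Q, rfl⟩ := hgenB z
  obtain ⟨x, hst, hPQ⟩ := hQ.exists_eval_eq_eval_ne h hyz
  obtain ⟨φ, hinj, hrange, hφ⟩ := hiso x ⟨_, _, ⟨P, rfl⟩, ⟨Q, rfl⟩, hPQ⟩
  exact eval_eq_of_injective_isHom hA hφ hinj (hrange ▸ Set.mem_range_self a) hst

/-- If the nontrivial `1`-generated `A` is isomorphic to each of its nontrivial
`1`-generated subalgebras, then every nontrivial `1`-generated member of `Q(A)` is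
isomorphic to `A` (by an isomorphism matching the generators); in particular `A` is the
`1`-generated free algebra of `Q(A)`. -/
theorem stmt_11 (F : Type) [CommGroup F] (A : Type) [SemilatticeInf A] [MulAction F A]
    (hA : ∀ (g : F) (x y : A), g • (x ⊓ y) = g • x ⊓ g • y)
    (hnt : Nontrivial A)
    (a : A) (hgen : ∀ x : A, ∃ t : SLTerm F, t.eval a = x)
    (hiso : ∀ b : A, (∃ x y : A, x ∈ genSet F b ∧ y ∈ genSet F b ∧ x ≠ y) →
      ∃ φ : A → A, Function.Injective φ ∧ Set.range φ = genSet F b ∧ IsHom F φ) :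
    ∀ (B : Type) [SemilatticeInf B] [MulAction F B],
      (∀ (g : F) (x y : B), g • (x ⊓ y) = g • x ⊓ g • y) →
      InQ F A B → Nontrivial B →
      ∀ b : B, (∀ y : B, ∃ t : SLTerm F, t.eval b = y) →
        ∃ φ : A → B, Function.Bijective φ ∧ IsHom F φ ∧ φ a = b :=
  stmt_11_general F A hA a hgen hiso
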